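/- Let V be a finite-dimensional real vector space and let P, Q ⊆ V be nonempty compact convex polytopes (convex hulls of nonempty finite sets). Then for every x ∈ V, the Euler-characteristic convolution (1_P ⋆ 1_Q)(x) := I applied to the polyhedral function y ↦ 1_P(y)·1_Q(x − y) (i.e. I(1_{P ∩ (x − Q)})) equals 1 if x lies in the Minkowski sum P + Q and equals 0 otherwise. In other words, 1_P ⋆ 1_Q = 1_{P+Q}. -/

import Mathlib

/-- A polyhedral cell in a real vector space: a nonempty subset cut out by finitely many
affine-linear equalities and finitely many strict affine-linear inequalities. -/
def IsPolyhedralCell {W : Type*} [AddCommGroup W] [Module ℝ W] (C : Set W) : Prop :=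
  C.Nonempty ∧
    ∃ (p q : ℕ) (f : Fin p → (W →ᵃ[ℝ] ℝ)) (g : Fin q → (W →ᵃ[ℝ] ℝ)),
      C = {x | (∀ i, f i x = 0) ∧ ∀ j, 0 < g j x}

/-- The dimension of a subset of a real vector space: the dimension of its affine span. -/
noncomputable def cellDim {W : Type*} [AddCommGroup W] [Module ℝ W] (C : Set W) : ℕ :=
  Module.finrank ℝ (affineSpan ℝ C).direction

open Classical in
/-- The (integer-valued) indicator function of a set. -/
noncomputable def ind {W : Type*} (C : Set W) : W → ℤ := fun x => if x ∈ C then 1 else 0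

/-- The group of polyhedral functions on `W`: the subgroup of the additive group of
functions `W → ℤ` generated by indicator functions of polyhedral cells. -/
def PolF (W : Type*) [AddCommGroup W] [Module ℝ W] : AddSubgroup (W → ℤ) :=
  AddSubgroup.closure {f | ∃ C : Set W, IsPolyhedralCell C ∧ f = ind C}

theorem ind_mem_PolF {W : Type*} [AddCommGroup W] [Module ℝ W] {C : Set W}
    (hC : IsPolyhedralCell C) : ind C ∈ PolF W :=
  AddSubgroup.subset_closure ⟨C, hC, rfl⟩

/-- `I : PolF W →+ ℤ` is integration against Euler-characteristic measure if it sends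
the indicator function of every polyhedral cell `C` to `(-1) ^ dim C`. -/
def IsEulerHom {W : Type*} [AddCommGroup W] [Module ℝ W] (I : PolF W →+ ℤ) : Prop :=
  ∀ (C : Set W) (hC : IsPolyhedralCell C),
    I ⟨ind C, ind_mem_PolF hC⟩ = (-1) ^ cellDim C

/-! The set of `y` with `y ∈ P` and `x - y ∈ Q` is the polytope `K = P ∩ (x - Q)`, which is empty
exactly when `x ∉ P + Q`; so it suffices that a nonempty polytope has Euler integral `1`.
By Fourier–Motzkin elimination a convex hull of finitely many points is cut out by finitely many
affine inequalities `gᵢ ≥ 0`, hence so is `K`; sorting its points by the set of indices `i` with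
`gᵢ > 0` splits `K` into polyhedral cells. Pick `c ∈ K` at which as many `gᵢ` as possible are
positive. Every other point of `K` lies on exactly one segment `(c, y]` with `y` in a boundary
cell `C` (one on which some `gᵢ` positive at `c` vanishes), so `K` is `{c}` together with the
half-open pyramids `(c, C]`. Each of these is `C` plus the open pyramid `(c, C)`, a cell of
dimension `dim C + 1`, so it has Euler integral `0`, and `K` has Euler integral `1`. -/

open Set AffineMap Module

section Polyhedron

variable {V W : Type*} [AddCommGroup V] [Module ℝ V] [AddCommGroup W] [Module ℝ W]

def polyhedron {ι : Type*} (g : ι → V →ᵃ[ℝ] ℝ) : Set V := {x | ∀ i, 0 ≤ g i x}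

/-- Closed polyhedra, as opposed to the relatively open polyhedral cells. -/
def IsPolyhedron (X : Set V) : Prop :=
  ∃ (ι : Type) (_ : Finite ι) (g : ι → V →ᵃ[ℝ] ℝ), X = polyhedron g

theorem isPolyhedron_polyhedron {ι : Type*} [Finite ι] (g : ι → V →ᵃ[ℝ] ℝ) :
    IsPolyhedron (polyhedron g) := by
  obtain ⟨n, ⟨e⟩⟩ := Finite.exists_equiv_fin ι
  exact ⟨Fin n, inferInstance, g ∘ e.symm, by ext x; simp [polyhedron, e.symm.forall_congr_left]⟩

theorem IsPolyhedron.inter {X Y : Set V} (hX : IsPolyhedron X) (hY : IsPolyhedron Y) :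
    IsPolyhedron (X ∩ Y) := by
  obtain ⟨ι, _, g, rfl⟩ := hX
  obtain ⟨κ, _, h, rfl⟩ := hY
  convert isPolyhedron_polyhedron (Sum.elim g h) using 1
  ext x
  simp [polyhedron, Sum.forall]

theorem IsPolyhedron.iInter {κ : Type*} [Finite κ] {X : κ → Set V}
    (hX : ∀ j, IsPolyhedron (X j)) : IsPolyhedron (⋂ j, X j) := by
  choose ι _ g hg using hX
  convert isPolyhedron_polyhedron fun p : Σ j, ι j => g p.1 p.2 using 1
  ext x
  simp [hg, polyhedron, Sigma.forall]

theorem IsPolyhedron.preimage {X : Set V} (hX : IsPolyhedron X) (f : W →ᵃ[ℝ] V) :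
    IsPolyhedron (f ⁻¹' X) := by
  obtain ⟨ι, _, g, rfl⟩ := hX
  exact ⟨ι, inferInstance, fun i => (g i).comp f, rfl⟩

theorem isPolyhedron_setOf_nonneg (f : V →ᵃ[ℝ] ℝ) : IsPolyhedron {x | 0 ≤ f x} := by
  simpa [polyhedron] using isPolyhedron_polyhedron fun _ : Unit => f

theorem isPolyhedron_setOf_eq (f g : V →ᵃ[ℝ] ℝ) : IsPolyhedron {x | f x = g x} := by
  convert (isPolyhedron_setOf_nonneg (f - g)).inter (isPolyhedron_setOf_nonneg (g - f)) using 1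
  ext x
  simp [le_antisymm_iff, and_comm]

theorem isPolyhedron_singleton [FiniteDimensional ℝ V] (c : V) : IsPolyhedron {c} := by
  let b := finBasis ℝ V
  have : {c} = ⋂ i, {x | (b.coord i).toAffineMap x = AffineMap.const ℝ V (b.coord i c) x} := by
    ext x
    simp [b.ext_elem_iff]
  rw [this]
  exact IsPolyhedron.iInter fun i => isPolyhedron_setOf_eq _ _

theorem isPolyhedron_stdSimplex (ι : Type*) [Fintype ι] : IsPolyhedron (stdSimplex ℝ ι) := by
  let proj : ι → (ι → ℝ) →ₗ[ℝ] ℝ := LinearMap.proj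
  have : stdSimplex ℝ ι = (⋂ i, {w | 0 ≤ (proj i).toAffineMap w}) ∩
      {w | (∑ i, proj i).toAffineMap w = AffineMap.const ℝ (ι → ℝ) 1 w} := by
    ext w
    simp only [stdSimplex, mem_ofPred_eq, LinearMap.coe_toAffineMap, LinearMap.coe_sum,
      Finset.sum_apply, const_apply, mem_inter_iff, mem_iInter]
    rfl
  rw [this]
  exact .inter (.iInter fun i => isPolyhedron_setOf_nonneg _)
    (isPolyhedron_setOf_eq _ _)

theorem exists_forall_le_le_of_finite {L U : Set ℝ} (hL : L.Finite) (hU : U.Finite)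
    (h : ∀ l ∈ L, ∀ u ∈ U, l ≤ u) : ∃ t, (∀ l ∈ L, l ≤ t) ∧ ∀ u ∈ U, t ≤ u := by
  rcases L.eq_empty_or_nonempty with rfl | hne
  · obtain ⟨t, ht⟩ := hU.bddBelow
    exact ⟨t, by simp, ht⟩
  · exact ⟨sSup L, fun l hl => le_csSup hL.bddAbove hl,
      fun u hu => csSup_le hne fun l hl => h l hl u hu⟩

/-- Fourier–Motzkin elimination of one real variable. -/
theorem exists_forall_nonneg_add_mul_iff {ι : Type*} [Finite ι] (a c : ι → ℝ) :
    (∃ t : ℝ, ∀ i, 0 ≤ a i + t * c i) ↔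
      (∀ i, c i = 0 → 0 ≤ a i) ∧ ∀ i, 0 < c i → ∀ j, c j < 0 → 0 ≤ c i * a j - c j * a i := by
  constructor
  · rintro ⟨t, ht⟩
    refine ⟨fun i hi => by simpa [hi] using ht i, fun i hi j hj => ?_⟩
    have key : c i * a j - c j * a i = c i * (a j + t * c j) + -c j * (a i + t * c i) := by ring
    rw [key]
    exact add_nonneg (mul_nonneg hi.le (ht j)) (mul_nonneg (neg_nonneg.2 hj.le) (ht i))
  · rintro ⟨hzero, hpair⟩
    obtain ⟨t, hlow, hup⟩ := exists_forall_le_le_of_finite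
      (Set.finite_range fun i : {i // 0 < c i} => -a i / c i)
      (Set.finite_range fun j : {j // c j < 0} => a j / -c j) (by
        rintro - ⟨⟨i, hi⟩, rfl⟩ - ⟨⟨j, hj⟩, rfl⟩
        rw [div_le_div_iff₀ hi (neg_pos.2 hj)]
        linarith [hpair i hi j hj])
    refine ⟨t, fun i => ?_⟩
    rcases lt_trichotomy (c i) 0 with hi | hi | hi
    · have := hup _ ⟨⟨i, hi⟩, rfl⟩
      rw [le_div_iff₀ (neg_pos.2 hi)] at this
      linarith
    · simpa [hi] using hzero i hi
    · have := hlow _ ⟨⟨i, hi⟩, rfl⟩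
      rw [div_le_iff₀ hi] at this
      linarith

theorem IsPolyhedron.image_snd {X : Set (ℝ × V)} (hX : IsPolyhedron X) :
    IsPolyhedron (Prod.snd '' X) := by
  obtain ⟨ι, _, g, rfl⟩ := hX
  let a : ι → V →ᵃ[ℝ] ℝ := fun i => (g i).comp (LinearMap.inr ℝ ℝ V).toAffineMap
  let c : ι → ℝ := fun i => (g i).linear (1, 0)
  have hg : ∀ i t w, g i (t, w) = a i w + t * c i := fun i t w => by
    have : ((t, w) : ℝ × V) = t • ((1 : ℝ), (0 : V)) +ᵥ ((0 : ℝ), w) := by simp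
    rw [this, AffineMap.map_vadd, map_smul, smul_eq_mul, vadd_eq_add, add_comm]
    rfl
  convert isPolyhedron_polyhedron (ι := {i // c i = 0} ⊕ {i // 0 < c i} × {j // c j < 0})
    (Sum.elim (fun i => a i) (fun p => c p.1 • a p.2 - c p.2 • a p.1)) using 1
  ext w
  have := exists_forall_nonneg_add_mul_iff (fun i => a i w) c
  simp only [polyhedron, mem_image, mem_ofPred_eq, Prod.exists, exists_eq_right, hg] at this ⊢
  rw [this]
  simp [Sum.forall, Prod.forall]

theorem IsPolyhedron.image_snd_fin :
    ∀ (k : ℕ) {X : Set ((Fin k → ℝ) × V)}, IsPolyhedron X → IsPolyhedron (Prod.snd '' X)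
  | 0, X, hX => by
    convert hX.preimage (LinearMap.inr ℝ (Fin 0 → ℝ) V).toAffineMap using 1
    ext v
    refine ⟨?_, fun hv => ⟨(0, v), hv, rfl⟩⟩
    rintro ⟨p, hp, rfl⟩
    rwa [← Prod.mk.eta (p := p), Subsingleton.elim p.1 0] at hp
  | k + 1, X, hX => by
    let e : (ℝ × (Fin k → ℝ) × V) ≃ₗ[ℝ] (Fin (k + 1) → ℝ) × V :=
      (LinearEquiv.prodAssoc ℝ ℝ (Fin k → ℝ) V).symm.trans
        ((Fin.consLinearEquiv ℝ fun _ => ℝ).prodCongr (LinearEquiv.refl ℝ V))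
    have h := image_snd_fin k (hX.preimage e.toLinearMap.toAffineMap).image_snd
    rw [LinearMap.coe_toAffineMap, LinearEquiv.coe_coe, ← e.image_symm_eq_preimage,
      image_image, image_image] at h
    exact h

theorem IsPolyhedron.image_snd_pi {ι : Type*} [Finite ι] {X : Set ((ι → ℝ) × V)}
    (hX : IsPolyhedron X) : IsPolyhedron (Prod.snd '' X) := by
  obtain ⟨k, ⟨σ⟩⟩ := Finite.exists_equiv_fin ι
  let e : ((Fin k → ℝ) × V) ≃ₗ[ℝ] (ι → ℝ) × V :=
    (LinearEquiv.funCongrLeft ℝ ℝ σ).prodCongr (LinearEquiv.refl ℝ V)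
  have h := IsPolyhedron.image_snd_fin k (hX.preimage e.toLinearMap.toAffineMap)
  rw [LinearMap.coe_toAffineMap, LinearEquiv.coe_coe, ← e.image_symm_eq_preimage,
    image_image] at h
  exact h

theorem IsPolyhedron.image_linearMap [FiniteDimensional ℝ V] {ι : Type*} [Finite ι]
    {X : Set (ι → ℝ)} (hX : IsPolyhedron X) (f : (ι → ℝ) →ₗ[ℝ] V) : IsPolyhedron (f '' X) := by
  have hgraph := (isPolyhedron_singleton (0 : V)).preimage
    (LinearMap.snd ℝ (ι → ℝ) V - f ∘ₗ LinearMap.fst ℝ (ι → ℝ) V).toAffineMap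
  convert ((hX.preimage (LinearMap.fst ℝ (ι → ℝ) V).toAffineMap).inter hgraph).image_snd_pi
    using 1
  ext v
  simp [sub_eq_zero, eq_comm (a := v)]

theorem isPolyhedron_convexHull [FiniteDimensional ℝ V] (S : Finset V) :
    IsPolyhedron (convexHull ℝ (S : Set V)) := by
  rw [S.finite_toSet.convexHull_eq_image]
  -- the `Fintype` instance that `convexHull_eq_image` puts on `↥S`
  let := S.finite_toSet.fintype
  exact (isPolyhedron_stdSimplex _).image_linearMap _

theorem lineMap_mem_polyhedron {ι : Type*} {g : ι → V →ᵃ[ℝ] ℝ} {x y : V}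
    (hx : x ∈ polyhedron g) (hy : y ∈ polyhedron g) {t : ℝ} (ht : t ∈ Icc 0 1) :
    lineMap x y t ∈ polyhedron g := fun i => by
  rw [apply_lineMap, lineMap_apply_ring]
  nlinarith [hx i, hy i, ht.1, ht.2]

end Polyhedron

section Ray

variable {V : Type*} [AddCommGroup V] [Module ℝ V]

def NoRay (K : Set V) : Prop := ∀ x y : V, x ≠ y → ∃ t : ℝ, 0 ≤ t ∧ lineMap x y t ∉ K

theorem NoRay.mono {K L : Set V} (hL : NoRay L) (h : K ⊆ L) : NoRay K := fun x y hxy =>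
  (hL x y hxy).imp fun _ ht => ⟨ht.1, fun hK => ht.2 (h hK)⟩

theorem noRay_convexHull (S : Finset V) : NoRay (convexHull ℝ (S : Set V)) := by
  intro x y hxy
  obtain ⟨φ, hφ⟩ : ∃ φ : Dual ℝ V, φ (y - x) ≠ 0 := by
    by_contra! h
    exact hxy (sub_eq_zero.1 ((forall_dual_apply_eq_zero_iff ℝ _).1 h)).symm
  let ψ := (φ (y - x))⁻¹ • φ
  have hψ : ∀ t : ℝ, ψ (lineMap x y t) = ψ x + t := fun t => by
    have : ψ (y - x) = 1 := inv_mul_cancel₀ hφ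
    rw [lineMap_apply_module', map_add, map_smul, this, smul_eq_mul, mul_one, add_comm]
  obtain ⟨M, hM⟩ := (S.finite_toSet.image ψ).bddAbove
  have hbound : convexHull ℝ (S : Set V) ⊆ {z | ψ z ≤ M} :=
    convexHull_min (fun s hs => hM ⟨s, hs, rfl⟩) (convex_halfSpace_le ψ.isLinear M)
  refine ⟨max 0 (M - ψ x + 1), le_max_left _ _, fun hmem => ?_⟩
  have := hbound hmem
  simp only [mem_ofPred_eq, hψ] at this
  linarith [le_max_right 0 (M - ψ x + 1)]

end Ray

theorem ind_eq_indicator {α : Type*} (C : Set α) : ind C = C.indicator 1 := by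
  ext x
  simp [ind, Set.indicator]

theorem ind_empty {α : Type*} : ind (∅ : Set α) = 0 := by
  ext x
  simp [ind]

section EulerIntegral

variable {V : Type*} [AddCommGroup V] [Module ℝ V]

def HasEulerIntegral (I : PolF V →+ ℤ) (f : V → ℤ) (n : ℤ) : Prop :=
  ∃ h : f ∈ PolF V, I ⟨f, h⟩ = n

variable {I : PolF V →+ ℤ}

theorem hasEulerIntegral_zero : HasEulerIntegral I 0 0 :=
  ⟨(PolF V).zero_mem, map_zero I⟩

theorem HasEulerIntegral.add {f g : V → ℤ} {m n : ℤ} (hf : HasEulerIntegral I f m)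
    (hg : HasEulerIntegral I g n) : HasEulerIntegral I (f + g) (m + n) := by
  obtain ⟨hf, rfl⟩ := hf
  obtain ⟨hg, rfl⟩ := hg
  exact ⟨(PolF V).add_mem hf hg, map_add I ⟨f, hf⟩ ⟨g, hg⟩⟩

theorem hasEulerIntegral_sum {κ : Type*} (s : Finset κ) {f : κ → V → ℤ} {n : κ → ℤ}
    (h : ∀ j ∈ s, HasEulerIntegral I (f j) (n j)) :
    HasEulerIntegral I (∑ j ∈ s, f j) (∑ j ∈ s, n j) := by
  classical
  induction s using Finset.induction_on with
  | empty => simpa using hasEulerIntegral_zero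
  | insert j s hj ih =>
    rw [Finset.sum_insert hj, Finset.sum_insert hj]
    exact (h j (s.mem_insert_self j)).add (ih fun j' hj' => h j' (Finset.mem_insert_of_mem hj'))

theorem IsEulerHom.hasEulerIntegral_ind (hI : IsEulerHom I) {C : Set V}
    (hC : IsPolyhedralCell C) : HasEulerIntegral I (ind C) ((-1) ^ cellDim C) :=
  ⟨ind_mem_PolF hC, hI C hC⟩

end EulerIntegral

section Pyramid

variable {V : Type*} [AddCommGroup V] [Module ℝ V]

theorem isPolyhedralCell_of_finite {ιE ιH : Type*} [Finite ιE] [Finite ιH]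
    (E : ιE → V →ᵃ[ℝ] ℝ) (H : ιH → V →ᵃ[ℝ] ℝ)
    (hne : {x | (∀ i, E i x = 0) ∧ ∀ j, 0 < H j x}.Nonempty) :
    IsPolyhedralCell {x | (∀ i, E i x = 0) ∧ ∀ j, 0 < H j x} := by
  obtain ⟨p, ⟨eE⟩⟩ := Finite.exists_equiv_fin ιE
  obtain ⟨q, ⟨eH⟩⟩ := Finite.exists_equiv_fin ιH
  refine ⟨hne, p, q, E ∘ eE.symm, H ∘ eH.symm, ?_⟩
  ext x
  simp [eE.symm.forall_congr_left, eH.symm.forall_congr_left]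

theorem isPolyhedralCell_singleton [FiniteDimensional ℝ V] (c : V) :
    IsPolyhedralCell {c} := by
  let b := finBasis ℝ V
  have hc : {c} = {x | (∀ i, ((b.coord i).toAffineMap - const ℝ V (b.coord i c)) x = 0) ∧
      ∀ j : Empty, 0 < (j.elim : V →ᵃ[ℝ] ℝ) x} := by
    ext x
    simp [b.ext_elem_iff, sub_eq_zero]
  rw [hc]
  exact isPolyhedralCell_of_finite _ _ (hc ▸ singleton_nonempty c)

theorem cellDim_singleton (c : V) : cellDim {c} = 0 := by
  rw [cellDim, direction_affineSpan, vectorSpan_singleton, finrank_bot]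

theorem IsEulerHom.hasEulerIntegral_ind_singleton [FiniteDimensional ℝ V] {I : PolF V →+ ℤ}
    (hI : IsEulerHom I) (c : V) : HasEulerIntegral I (ind {c}) 1 := by
  simpa [cellDim_singleton] using hI.hasEulerIntegral_ind (isPolyhedralCell_singleton c)

/-- For `T = Ioc 0 1`, the pyramid with base `C` and apex `c`, apex removed. -/
def pyramid (c : V) (C : Set V) (T : Set ℝ) : Set V :=
  image2 (fun y t => lineMap c y t) C T

theorem sub_smul_apply_lineMap (f : V →ᵃ[ℝ] ℝ) {ρ : V →ᵃ[ℝ] ℝ} {c y : V} (hρc : ρ c = 1)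
    (hρy : ρ y = 0) (t : ℝ) :
    (f - f c • ρ) (lineMap c y t) = t * f y := by
  simp only [AffineMap.coe_sub, AffineMap.coe_smul, Pi.sub_apply, Pi.smul_apply, apply_lineMap,
    hρc, hρy, lineMap_apply_ring', smul_eq_mul]
  ring

theorem apply_lineMap_inv_one_sub (f : V →ᵃ[ℝ] ℝ) {ρ : V →ᵃ[ℝ] ℝ} (c : V) {z : V}
    (hz : ρ z ≠ 1) :
    f (lineMap c z (1 - ρ z)⁻¹) = (1 - ρ z)⁻¹ * (f - f c • ρ) z := by
  have : 1 - ρ z ≠ 0 := sub_ne_zero.2 hz.symm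
  simp only [AffineMap.coe_sub, AffineMap.coe_smul, Pi.sub_apply, Pi.smul_apply, apply_lineMap,
    lineMap_apply_ring', smul_eq_mul]
  field_simp
  ring

variable {C : Set V} {ρ : V →ᵃ[ℝ] ℝ} {c : V}

/-- `ρ` plays the role of `1 - t` on the pyramid: it equals `1 - t` at `lineMap c y t`, and
subtracting multiples of `ρ` turns the affine functions defining `C` into ones homogeneous
in `t`. -/
theorem IsPolyhedralCell.pyramid_Ioo (hC : IsPolyhedralCell C) (hρC : ∀ y ∈ C, ρ y = 0)
    (hρc : ρ c = 1) : IsPolyhedralCell (pyramid c C (Ioo 0 1)) := by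
  obtain ⟨⟨y₀, hy₀⟩, p, q, E, H, rfl⟩ := hC
  let H' : Fin q ⊕ Fin 2 → V →ᵃ[ℝ] ℝ :=
    Sum.elim (fun j => H j - H j c • ρ) ![ρ, const ℝ V 1 - ρ]
  have key : pyramid c {x | (∀ i, E i x = 0) ∧ ∀ j, 0 < H j x} (Ioo 0 1) =
      {z | (∀ i, (E i - E i c • ρ) z = 0) ∧ ∀ j, 0 < H' j z} := by
    ext z
    constructor
    · rintro ⟨y, ⟨hE, hH⟩, t, ⟨ht0, ht1⟩, rfl⟩
      have hy : ρ y = 0 := hρC y ⟨hE, hH⟩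
      refine ⟨fun i => by rw [sub_smul_apply_lineMap _ hρc hy, hE i, mul_zero], ?_⟩
      rintro (j | j)
      · simpa [H', sub_smul_apply_lineMap _ hρc hy] using mul_pos ht0 (hH j)
      · fin_cases j <;> simp [H', apply_lineMap, hρc, hy, lineMap_apply_ring'] <;> linarith
    · rintro ⟨hE, hH⟩
      have hρ0 : 0 < ρ z := by simpa [H'] using hH (.inr 0)
      have hρ1 : 0 < 1 - ρ z := by simpa [H'] using hH (.inr 1)
      have hρz : ρ z ≠ 1 := by linarith
      refine ⟨lineMap c z (1 - ρ z)⁻¹, ⟨fun i => ?_, fun j => ?_⟩, 1 - ρ z, ⟨hρ1, by linarith⟩, ?_⟩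
      · rw [apply_lineMap_inv_one_sub _ c hρz, hE i, mul_zero]
      · rw [apply_lineMap_inv_one_sub _ c hρz]
        exact mul_pos (inv_pos.2 hρ1) (by simpa [H'] using hH (.inl j))
      · dsimp only
        rw [lineMap_lineMap_right, mul_inv_cancel₀ hρ1.ne', lineMap_apply_one]
  rw [key]
  exact isPolyhedralCell_of_finite _ _
    (key ▸ ⟨_, mem_image2_of_mem hy₀ (b := 2⁻¹) ⟨by norm_num, by norm_num⟩⟩)

theorem affineSpan_pyramid_Ioo (hC : C.Nonempty) (c : V) :
    affineSpan ℝ (pyramid c C (Ioo 0 1)) = affineSpan ℝ (insert c C) := by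
  apply le_antisymm
  · refine affineSpan_le.2 ?_
    rintro - ⟨y, hy, t, -, rfl⟩
    exact lineMap_mem t (mem_affineSpan ℝ (mem_insert c C))
      (mem_affineSpan ℝ (mem_insert_of_mem c hy))
  · have hline : ∀ y ∈ C, ∀ s : ℝ, lineMap c y s ∈ affineSpan ℝ (pyramid c C (Ioo 0 1)) := by
      intro y hy s
      have h₁ : lineMap c y (3⁻¹ : ℝ) ∈ pyramid c C (Ioo 0 1) :=
        ⟨y, hy, 3⁻¹, ⟨by norm_num, by norm_num⟩, rfl⟩
      have h₂ : lineMap c y (2 / 3 : ℝ) ∈ pyramid c C (Ioo 0 1) :=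
        ⟨y, hy, 2 / 3, ⟨by norm_num, by norm_num⟩, rfl⟩
      convert lineMap_mem (3 * s - 1) (mem_affineSpan ℝ h₁) (mem_affineSpan ℝ h₂) using 1
      simp only [lineMap_apply_module']
      module
    obtain ⟨y₀, hy₀⟩ := hC
    refine affineSpan_le.2 (insert_subset_iff.2 ⟨?_, fun y hy => ?_⟩)
    · simpa using hline y₀ hy₀ 0
    · simpa using hline y hy 1

theorem cellDim_pyramid_Ioo [FiniteDimensional ℝ V] (hC : C.Nonempty) (hc : c ∉ affineSpan ℝ C) :
    cellDim (pyramid c C (Ioo 0 1)) = cellDim C + 1 := by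
  obtain ⟨y₀, hy₀⟩ := hC
  rw [cellDim, cellDim, affineSpan_pyramid_Ioo ⟨y₀, hy₀⟩, direction_affineSpan,
    direction_affineSpan]
  refine le_antisymm (finrank_vectorSpan_insert_le_set ℝ C c)
    (Submodule.finrank_lt_finrank_of_lt ?_)
  refine lt_of_le_of_ne (vectorSpan_mono ℝ (subset_insert c C)) fun h => hc ?_
  have : c -ᵥ y₀ ∈ (affineSpan ℝ C).direction := by
    rw [direction_affineSpan, h]
    exact vsub_mem_vectorSpan ℝ (mem_insert c C) (mem_insert_of_mem c hy₀)
  simpa using AffineSubspace.vadd_mem_of_mem_direction this (mem_affineSpan ℝ hy₀)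

theorem pyramid_Ioc_eq_union (c : V) (C : Set V) :
    pyramid c C (Ioc 0 1) = C ∪ pyramid c C (Ioo 0 1) := by
  rw [pyramid, ← Ioo_insert_right zero_lt_one, image2_insert_right]
  simp [pyramid]

theorem IsEulerHom.hasEulerIntegral_ind_pyramid_Ioc [FiniteDimensional ℝ V] {I : PolF V →+ ℤ}
    (hI : IsEulerHom I) (hC : IsPolyhedralCell C) (hρC : ∀ y ∈ C, ρ y = 0) (hρc : ρ c = 1) :
    HasEulerIntegral I (ind (pyramid c C (Ioc 0 1))) 0 := by
  have hc : c ∉ affineSpan ℝ C := fun h => by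
    simpa [hρc] using AffineMap.eqOn_affineSpan (f := ρ) (g := const ℝ V 0) hρC h
  have hdisj : Disjoint C (pyramid c C (Ioo 0 1)) := by
    refine disjoint_left.2 fun z hzC ⟨y, hy, t, ht, hz⟩ => ?_
    have := hρC z hzC
    rw [← hz, apply_lineMap, hρc, hρC y hy, lineMap_apply_ring'] at this
    linarith [ht.2]
  have h := (hI.hasEulerIntegral_ind hC).add (hI.hasEulerIntegral_ind (hC.pyramid_Ioo hρC hρc))
  rw [cellDim_pyramid_Ioo hC.1 hc, pow_succ, mul_neg_one, add_neg_cancel] at h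
  rwa [pyramid_Ioc_eq_union, ind_eq_indicator, indicator_union_of_disjoint hdisj,
    ← ind_eq_indicator, ← ind_eq_indicator]

end Pyramid

theorem lineMap_right_injective {V : Type*} [AddCommGroup V] [Module ℝ V] (c : V) {t : ℝ}
    (ht : t ≠ 0) : Function.Injective fun y : V => lineMap c y t := fun y₁ y₂ h => by
  simpa [lineMap_apply_module', smul_right_inj ht] using h

section SignCell

variable {V : Type*} [AddCommGroup V] [Module ℝ V] {ι : Type*} [Fintype ι]
  (g : ι → V →ᵃ[ℝ] ℝ)

noncomputable def posIndices (x : V) : Finset ι := Finset.univ.filter fun i => 0 < g i x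

def signCell (s : Finset ι) : Set V := {x | x ∈ polyhedron g ∧ posIndices g x = s}

variable {g}

theorem mem_posIndices {x : V} {i : ι} : i ∈ posIndices g x ↔ 0 < g i x := by
  simp [posIndices]

theorem isPolyhedralCell_signCell {s : Finset ι} (hs : (signCell g s).Nonempty) :
    IsPolyhedralCell (signCell g s) := by
  have h : signCell g s =
      {x | (∀ i : {i // i ∉ s}, g i x = 0) ∧ ∀ i : {i // i ∈ s}, 0 < g i x} := by
    ext x
    simp only [signCell, polyhedron, mem_ofPred_eq, Finset.ext_iff, mem_posIndices,
      Subtype.forall]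
    constructor
    · rintro ⟨hK, hs⟩
      exact ⟨fun i hi => le_antisymm (not_lt.1 (mt (hs i).1 hi)) (hK i), fun i hi => (hs i).2 hi⟩
    · rintro ⟨h0, hpos⟩
      refine ⟨fun i => ?_, fun i => ⟨fun hi => by_contra fun his => ?_, hpos i⟩⟩
      · by_cases hi : i ∈ s
        exacts [(hpos i hi).le, (h0 i hi).ge]
      · exact hi.ne' (h0 i his)
  rw [h]
  exact isPolyhedralCell_of_finite _ _ (h ▸ hs)

theorem posIndices_lineMap [DecidableEq ι] {x y : V} (hx : x ∈ polyhedron g) (hy : y ∈ polyhedron g)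
    {t : ℝ} (ht : t ∈ Ioo 0 1) :
    posIndices g (lineMap x y t) = posIndices g x ∪ posIndices g y := by
  ext i
  have := hx i
  have := hy i
  simp only [Finset.mem_union, mem_posIndices, apply_lineMap, lineMap_apply_ring]
  constructor
  · intro h
    by_contra! h'
    nlinarith [ht.1, ht.2]
  · rintro (h | h) <;> nlinarith [ht.1, ht.2]

theorem exists_max_posIndices (hne : (polyhedron g).Nonempty) :
    ∃ c ∈ polyhedron g, ∀ z ∈ polyhedron g, posIndices g z ⊆ posIndices g c := by
  classical
  obtain ⟨-, ⟨c, hc, rfl⟩, hmax⟩ := Set.exists_max_image (posIndices g '' polyhedron g)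
    Finset.card (Set.toFinite _) (hne.image _)
  refine ⟨c, hc, fun z hz => ?_⟩
  have hcard := hmax _ ⟨_, lineMap_mem_polyhedron hc hz (t := 2⁻¹) ⟨by norm_num, by norm_num⟩, rfl⟩
  rw [posIndices_lineMap hc hz ⟨by norm_num, by norm_num⟩] at hcard
  exact Finset.union_eq_left.1 (Finset.eq_of_superset_of_card_ge Finset.subset_union_left hcard)

end SignCell

section Decomposition

variable {V : Type*} [AddCommGroup V] [Module ℝ V] {ι : Type*} [Fintype ι]
  {g : ι → V →ᵃ[ℝ] ℝ} {c : V}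

/-- The ray from `c` through `z` leaves the polyhedron at the first point `y` where some
constraint positive at `c` vanishes. -/
theorem exists_lineMap_eq_of_noRay (hK : NoRay (polyhedron g)) (hc : c ∈ polyhedron g)
    {z : V} (hz : z ∈ polyhedron g) (hzc : z ≠ c) :
    ∃ y ∈ polyhedron g, posIndices g y ≠ posIndices g c ∧
      ∃ t ∈ Ioc (0 : ℝ) 1, lineMap c y t = z := by
  have hval : ∀ i t, g i (lineMap c z t) = g i c - t * (g i c - g i z) := fun i t => by
    rw [apply_lineMap, lineMap_apply_ring']
    ring
  obtain ⟨i₀, hi₀, hmin⟩ : ∃ i₀ ∈ Finset.univ.filter fun i => g i z < g i c,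
      ∀ i ∈ Finset.univ.filter fun i => g i z < g i c,
        g i₀ c / (g i₀ c - g i₀ z) ≤ g i c / (g i c - g i z) := by
    refine Finset.exists_min_image _ _ ?_
    obtain ⟨t, ht, hout⟩ := hK c z hzc.symm
    by_contra! hN
    refine hout fun i => ?_
    have : g i c ≤ g i z := not_lt.1 (Finset.filter_eq_empty_iff.1 hN (Finset.mem_univ i))
    rw [hval]
    nlinarith [hc i]
  simp only [Finset.mem_filter, Finset.mem_univ, true_and] at hi₀ hmin
  set τ := g i₀ c / (g i₀ c - g i₀ z)
  have hd : 0 < g i₀ c - g i₀ z := sub_pos.2 hi₀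
  have hτ : 1 ≤ τ := (one_le_div hd).2 (by linarith [hz i₀])
  have hτ₀ : 0 < τ := one_pos.trans_le hτ
  have hi₀y : g i₀ (lineMap c z τ) = 0 := by
    rw [hval, div_mul_cancel₀ _ hd.ne', sub_self]
  refine ⟨lineMap c z τ, fun i => ?_, fun h => ?_, τ⁻¹, ⟨inv_pos.2 hτ₀, inv_le_one_of_one_le₀ hτ⟩,
    by rw [lineMap_lineMap_right, inv_mul_cancel₀ hτ₀.ne', lineMap_apply_one]⟩
  · rw [hval]
    rcases lt_or_ge (g i z) (g i c) with hi | hi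
    · have := (le_div_iff₀ (sub_pos.2 hi)).1 (hmin i hi)
      linarith
    · nlinarith [hc i]
  · have : i₀ ∈ posIndices g (lineMap c z τ) := h ▸ mem_posIndices.2 (by linarith [hz i₀])
    exact (mem_posIndices.1 this).ne' hi₀y

/-- If `t₁ < t₂`, then `y₂` lies strictly between `c` and `y₁`, hence in the relative interior. -/
theorem eq_of_lineMap_eq_lineMap (hc : c ∈ polyhedron g)
    (hmax : ∀ z ∈ polyhedron g, posIndices g z ⊆ posIndices g c) {y₁ y₂ : V}
    (hy₁ : y₁ ∈ polyhedron g) (hy₂c : posIndices g y₂ ≠ posIndices g c)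
    {t₁ t₂ : ℝ} (ht₁ : 0 < t₁) (ht₁₂ : t₁ ≤ t₂) (h : lineMap c y₁ t₁ = lineMap c y₂ t₂) :
    y₁ = y₂ := by
  classical
  have ht₂ : t₂ ≠ 0 := (ht₁.trans_le ht₁₂).ne'
  rcases ht₁₂.eq_or_lt with rfl | hlt
  · exact lineMap_right_injective c ht₂ h
  · have hy₂ : y₂ = lineMap c y₁ (t₁ / t₂) := by
      refine lineMap_right_injective c ht₂ ?_
      simp only [lineMap_lineMap_right, mul_div_cancel₀ _ ht₂, h]
    refine absurd ?_ hy₂c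
    have ht₂ : 0 < t₂ := ht₁.trans hlt
    rw [hy₂, posIndices_lineMap hc hy₁ ⟨div_pos ht₁ ht₂, (div_lt_one ht₂).2 hlt⟩]
    exact Finset.union_eq_left.2 (hmax y₁ hy₁)

end Decomposition

section EulerPolyhedron

variable {V : Type*} [AddCommGroup V] [Module ℝ V] {ι : Type*} [Fintype ι]
  {g : ι → V →ᵃ[ℝ] ℝ} {c : V}

theorem ind_polyhedron_eq [DecidableEq ι] (hK : NoRay (polyhedron g)) (hc : c ∈ polyhedron g)
    (hmax : ∀ z ∈ polyhedron g, posIndices g z ⊆ posIndices g c) :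
    ind (polyhedron g) = ind {c} + ∑ s ∈ Finset.univ.erase (posIndices g c),
      ind (pyramid c (signCell g s) (Ioc 0 1)) := by
  have mem_pyramid : ∀ {s z}, z ∈ pyramid c (signCell g s) (Ioc 0 1) ↔
      ∃ y ∈ polyhedron g, posIndices g y = s ∧ ∃ t ∈ Ioc (0 : ℝ) 1, lineMap c y t = z := by
    simp [pyramid, signCell, and_assoc]
  have hunion : polyhedron g = {c} ∪ ⋃ s ∈ Finset.univ.erase (posIndices g c),
      pyramid c (signCell g s) (Ioc 0 1) := by
    ext z
    simp only [mem_union, mem_singleton_iff, mem_iUnion, Finset.mem_erase, Finset.mem_univ,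
      and_true, exists_prop, mem_pyramid]
    constructor
    · intro hz
      by_cases hzc : z = c
      · exact .inl hzc
      · obtain ⟨y, hy, hyc, ht⟩ := exists_lineMap_eq_of_noRay hK hc hz hzc
        exact .inr ⟨_, hyc, y, hy, rfl, ht⟩
    · rintro (rfl | ⟨s, -, y, hy, -, t, ht, rfl⟩)
      exacts [hc, lineMap_mem_polyhedron hc hy (Ioc_subset_Icc_self ht)]
  have hdisj_apex : Disjoint {c} (⋃ s ∈ Finset.univ.erase (posIndices g c),
      pyramid c (signCell g s) (Ioc 0 1)) := by
    simp only [disjoint_singleton_left, mem_iUnion, Finset.mem_erase, Finset.mem_univ, and_true,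
      exists_prop, mem_pyramid, not_exists, not_and]
    rintro s hs y - rfl t ht hyc
    rw [lineMap_eq_left_iff] at hyc
    exact hs (by rw [hyc.resolve_right ht.1.ne'])
  have hdisj : (↑(Finset.univ.erase (posIndices g c)) : Set (Finset ι)).PairwiseDisjoint
      fun s => pyramid c (signCell g s) (Ioc 0 1) := by
    intro s₁ hs₁ s₂ hs₂ hne
    refine disjoint_left.2 fun z hz₁ hz₂ => hne ?_
    obtain ⟨y₁, hy₁, rfl, t₁, ht₁, rfl⟩ := mem_pyramid.1 hz₁
    obtain ⟨y₂, hy₂, rfl, t₂, ht₂, h⟩ := mem_pyramid.1 hz₂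
    rcases le_total t₁ t₂ with h₁₂ | h₂₁
    · rw [eq_of_lineMap_eq_lineMap hc hmax hy₁ (Finset.ne_of_mem_erase hs₂) ht₁.1 h₁₂ h.symm]
    · rw [eq_of_lineMap_eq_lineMap hc hmax hy₂ (Finset.ne_of_mem_erase hs₁) ht₂.1 h₂₁ h]
  rw [hunion, ind_eq_indicator, indicator_union_of_disjoint hdisj_apex,
    Finset.indicator_biUnion _ _ hdisj]
  ext z
  simp only [Pi.add_apply, Finset.sum_apply, ind_eq_indicator]

theorem IsEulerHom.hasEulerIntegral_ind_pyramid_signCell [FiniteDimensional ℝ V]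
    {I : PolF V →+ ℤ} (hI : IsEulerHom I)
    (hmax : ∀ z ∈ polyhedron g, posIndices g z ⊆ posIndices g c) {s : Finset ι}
    (hs : s ≠ posIndices g c) :
    HasEulerIntegral I (ind (pyramid c (signCell g s) (Ioc 0 1))) 0 := by
  rcases (signCell g s).eq_empty_or_nonempty with h | ⟨y, hy, rfl⟩
  · rw [h, pyramid, image2_empty_left, ind_empty]
    exact hasEulerIntegral_zero
  obtain ⟨i, hic, hiy⟩ := Finset.not_subset.1 fun h => hs ((hmax y hy).antisymm h)
  have hgic : 0 < g i c := mem_posIndices.1 hic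
  refine hI.hasEulerIntegral_ind_pyramid_Ioc (isPolyhedralCell_signCell ⟨y, hy, rfl⟩)
    (ρ := (g i c)⁻¹ • g i) (fun x ⟨hx, hxy⟩ => ?_) (by simp [hgic.ne'])
  have : g i x = 0 := le_antisymm (not_lt.1 fun h => hiy (hxy ▸ mem_posIndices.2 h)) (hx i)
  simp [this]

theorem IsEulerHom.hasEulerIntegral_ind_polyhedron [FiniteDimensional ℝ V] {I : PolF V →+ ℤ}
    (hI : IsEulerHom I) (hne : (polyhedron g).Nonempty) (hK : NoRay (polyhedron g)) :
    HasEulerIntegral I (ind (polyhedron g)) 1 := by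
  classical
  obtain ⟨c, hc, hmax⟩ := exists_max_posIndices hne
  have h := (hI.hasEulerIntegral_ind_singleton c).add
    (hasEulerIntegral_sum (Finset.univ.erase _) fun s hs =>
      hI.hasEulerIntegral_ind_pyramid_signCell hmax (Finset.ne_of_mem_erase hs))
  rwa [Finset.sum_const_zero, add_zero, ← ind_polyhedron_eq hK hc hmax] at h

theorem IsPolyhedron.hasEulerIntegral_ind [FiniteDimensional ℝ V] {I : PolF V →+ ℤ}
    (hI : IsEulerHom I) {K : Set V} (hK : IsPolyhedron K) (hne : K.Nonempty) (hray : NoRay K) :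
    HasEulerIntegral I (ind K) 1 := by
  obtain ⟨ι, _, g, rfl⟩ := hK
  have := Fintype.ofFinite ι
  exact hI.hasEulerIntegral_ind_polyhedron hne hray

end EulerPolyhedron

open Pointwise Classical in
theorem statement9_general (V : Type*) [AddCommGroup V] [Module ℝ V] [FiniteDimensional ℝ V]
    (I : PolF V →+ ℤ) (hI : IsEulerHom I)
    (S T : Finset V)
    (P Q : Set V) (hP : P = convexHull ℝ (S : Set V)) (hQ : Q = convexHull ℝ (T : Set V))
    (x : V) :
    ∃ hmem : (fun y => ind P y * ind Q (x - y)) ∈ PolF V,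
      I ⟨fun y => ind P y * ind Q (x - y), hmem⟩ = if x ∈ P + Q then 1 else 0 := by
  let K := P ∩ (const ℝ V x - AffineMap.id ℝ V) ⁻¹' Q
  have hK : (fun y => ind P y * ind Q (x - y)) = ind K := by
    ext y
    by_cases hy : y ∈ P <;> simp [ind, K, hy]
  have hK_nonempty : K.Nonempty ↔ x ∈ P + Q := by
    simp [K, Set.Nonempty, mem_add, ← eq_sub_iff_add_eq']
  change HasEulerIntegral I _ _
  rw [hK]
  split_ifs with hx
  · subst hP hQ
    exact (isPolyhedron_convexHull S).inter ((isPolyhedron_convexHull T).preimage _)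
      |>.hasEulerIntegral_ind hI (hK_nonempty.2 hx) ((noRay_convexHull S).mono inter_subset_left)
  · rw [not_nonempty_iff_eq_empty.1 (mt hK_nonempty.1 hx), ind_empty]
    exact hasEulerIntegral_zero

open Pointwise Classical in
/-- Euler-characteristic convolution of indicator functions of compact
convex polytopes: `1_P ⋆ 1_Q = 1_{P+Q}`, i.e. for every `x`,
`I(y ↦ 1_P(y)·1_Q(x−y))` is `1` if `x ∈ P + Q` (Minkowski sum) and `0` otherwise. -/
theorem statement9 (V : Type*) [AddCommGroup V] [Module ℝ V] [FiniteDimensional ℝ V]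
    (I : PolF V →+ ℤ) (hI : IsEulerHom I)
    (S T : Finset V) (hS : S.Nonempty) (hT : T.Nonempty)
    (P Q : Set V) (hP : P = convexHull ℝ (S : Set V)) (hQ : Q = convexHull ℝ (T : Set V))
    (x : V) :
    ∃ hmem : (fun y => ind P y * ind Q (x - y)) ∈ PolF V,
      I ⟨fun y => ind P y * ind Q (x - y), hmem⟩ = if x ∈ P + Q then 1 else 0 :=
  statement9_general V I hI S T P Q hP hQ x
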